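/- Let α, β, γ be types and let f : α → List Bool → β → γ → List Bool → γ and h : α → List Bool → β → γ → γ satisfy: (i) f x [] b c d = c for all x, b, c, d, and (ii) f x (a ++ [i]) b c d = h x (d ++ List.replicate a.length false) b (f x a b c d) for all x, a, b, c, d and both digits i : Bool. Then for every n : ℕ and every word a with n ≤ a.length, and all x, b, c, d: f x (List.take (a.length - n) a) b (f x (List.replicate n false) b c d) (d ++ List.replicate n false) = f x a b c d. -/

import Mathlib

/-! The recursion step reads only the length of the word already processed, never its digits, so
`f x a` depends on `a` only through its length, and `a` may be replaced by
`0ⁿ ++ take (|a| - n) a`. Running the recursion over `0ⁿ` and then over a word `v`, with `d` padded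
by `n` zeros, is the recursion over `0ⁿ ++ v`. -/

section RecursionOnNotation

variable {α β γ : Type*} {f : α → List Bool → β → γ → List Bool → γ} {h : α → List Bool → β → γ → γ}

theorem apply_eq_apply_replicate_length
    (hstep : ∀ x (a : List Bool) b c d (i : Bool),
      f x (a ++ [i]) b c d = h x (d ++ List.replicate a.length false) b (f x a b c d))
    (x : α) (a : List Bool) (b : β) (c : γ) (d : List Bool) :
    f x a b c d = f x (List.replicate a.length false) b c d := by
  induction a using List.reverseRecOn with
  | nil => rfl
  | append_singleton a i ih =>
    rw [List.length_append, List.length_singleton, List.replicate_succ', hstep, hstep, ih,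
      List.length_replicate]

theorem apply_eq_of_length_eq
    (hstep : ∀ x (a : List Bool) b c d (i : Bool),
      f x (a ++ [i]) b c d = h x (d ++ List.replicate a.length false) b (f x a b c d))
    {a a' : List Bool} (hlen : a.length = a'.length) (x : α) (b : β) (c : γ) (d : List Bool) :
    f x a b c d = f x a' b c d := by
  rw [apply_eq_apply_replicate_length hstep, hlen, ← apply_eq_apply_replicate_length hstep]

theorem apply_apply_eq_apply_append
    (hbase : ∀ x b c d, f x [] b c d = c)
    (hstep : ∀ x (a : List Bool) b c d (i : Bool),
      f x (a ++ [i]) b c d = h x (d ++ List.replicate a.length false) b (f x a b c d))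
    (x : α) (w v : List Bool) (b : β) (c : γ) (d : List Bool) :
    f x v b (f x w b c d) (d ++ List.replicate w.length false) = f x (w ++ v) b c d := by
  induction v using List.reverseRecOn with
  | nil => rw [hbase, List.append_nil]
  | append_singleton v i ih =>
    rw [hstep, ih, ← List.append_assoc, hstep, List.append_assoc, ← List.replicate_add,
      List.length_append]

end RecursionOnNotation

theorem split_recursion_argument {α β γ : Type*}
    (f : α → List Bool → β → γ → List Bool → γ)
    (h : α → List Bool → β → γ → γ)
    (hbase : ∀ x b c d, f x [] b c d = c)
    (hstep : ∀ x (a : List Bool) b c d (i : Bool),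
      f x (a ++ [i]) b c d = h x (d ++ List.replicate a.length false) b (f x a b c d)) :
    ∀ (n : ℕ) (a : List Bool), n ≤ a.length →
      ∀ x b c (d : List Bool),
        f x (List.take (a.length - n) a) b (f x (List.replicate n false) b c d)
          (d ++ List.replicate n false) = f x a b c d := by
  intro n a hn x b c d
  have hlen : (List.replicate n false ++ List.take (a.length - n) a).length = a.length := by
    simp only [List.length_append, List.length_replicate, List.length_take]
    omega
  simpa only [List.length_replicate] using
    (apply_apply_eq_apply_append hbase hstep x (List.replicate n false)
      (List.take (a.length - n) a) b c d).trans (apply_eq_of_length_eq hstep hlen x b c d)
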